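/- Let p : Fin 4 → ℝ² be a quadrilateral in general position, and let H ∈ ℝ^{3×3} with det(H) ≠ 0 and w_H(p_i) > 0 for all i. Then the transformed quadrilateral f_H ∘ p is also in general position, and its Q-value equals the Q-value of p. In particular, a convex (respectively concave non-self-intersecting, respectively concave self-intersecting) quadrilateral appears as convex (respectively concave non-self-intersecting, respectively concave self-intersecting) under the homography f_H. -/
import Mathlib


/-- The cross value of three points in the plane: the z-coordinate of the
cross product `(b - a) × (c - b)`. -/
noncomputable def cross (a b c : ℝ × ℝ) : ℝ :=
  (b.1 - a.1) * (c.2 - b.2) - (b.2 - a.2) * (c.1 - b.1)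

/-- The lift of a planar point `(x, y)` to `(x, y, 1) ∈ ℝ³`. -/
noncomputable def liftPt (p : ℝ × ℝ) : Fin 3 → ℝ := ![p.1, p.2, 1]

/-- The homography denominator: the third coordinate of `H ℓ(p)`. -/
noncomputable def wH (H : Matrix (Fin 3) (Fin 3) ℝ) (p : ℝ × ℝ) : ℝ :=
  H.mulVec (liftPt p) 2

/-- The planar homography induced by the matrix `H`. -/
noncomputable def fH (H : Matrix (Fin 3) (Fin 3) ℝ) (p : ℝ × ℝ) : ℝ × ℝ :=
  (H.mulVec (liftPt p) 0 / wH H p, H.mulVec (liftPt p) 1 / wH H p)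


/-- A quadrilateral `p : Fin 4 → ℝ²` is in general position if no three of its
four points are collinear. -/
def GeneralPosition (p : Fin 4 → ℝ × ℝ) : Prop :=
  ∀ i j k : Fin 4, i ≠ j → i ≠ k → j ≠ k → cross (p i) (p j) (p k) ≠ 0

/-- The Q-value of a quadrilateral: `|∑ i, sgn (cross (p (i-1)) (p i) (p (i+1)))|`. -/
noncomputable def Qvalue (p : Fin 4 → ℝ × ℝ) : ℝ :=
  |∑ i : Fin 4, Real.sign (cross (p (i - 1)) (p i) (p (i + 1)))|

lemma cross_div (x1 y1 w1 x2 y2 w2 x3 y3 w3 : ℝ) (h1 : w1 ≠ 0) (h2 : w2 ≠ 0)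
    (h3 : w3 ≠ 0) :
    cross (x1 / w1, y1 / w1) (x2 / w2, y2 / w2) (x3 / w3, y3 / w3)
      = (x1 * (y2 * w3 - w2 * y3) - y1 * (x2 * w3 - w2 * x3)
          + w1 * (x2 * y3 - y2 * x3)) / (w1 * w2 * w3) := by
  unfold cross
  field_simp
  ring

lemma cross_fH (H : Matrix (Fin 3) (Fin 3) ℝ) (a b c : ℝ × ℝ)
    (ha : wH H a ≠ 0) (hb : wH H b ≠ 0) (hc : wH H c ≠ 0) :
    cross (fH H a) (fH H b) (fH H c)
      = H.det * cross a b c / (wH H a * wH H b * wH H c) := by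
  set u := H.mulVec (liftPt a) with hu
  set v := H.mulVec (liftPt b) with hv
  set t := H.mulVec (liftPt c) with ht
  show cross (u 0 / u 2, u 1 / u 2) (v 0 / v 2, v 1 / v 2) (t 0 / t 2, t 1 / t 2)
      = H.det * cross a b c / (u 2 * v 2 * t 2)
  have ha : u 2 ≠ 0 := ha
  have hb : v 2 ≠ 0 := hb
  have hc : t 2 ≠ 0 := hc
  rw [cross_div _ _ _ _ _ _ _ _ _ ha hb hc]
  congr 1
  have hM : !![u 0, u 1, u 2; v 0, v 1, v 2; t 0, t 1, t 2]
      = (Matrix.of ![liftPt a, liftPt b, liftPt c]) * H.transpose := by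
    ext i j
    fin_cases i <;> fin_cases j <;>
      simp [hu, hv, ht, Matrix.mul_apply, Matrix.mulVec, dotProduct,
        Fin.sum_univ_three, liftPt] <;> ring
  have := congrArg Matrix.det hM
  rw [Matrix.det_mul, Matrix.det_transpose] at this
  rw [Matrix.det_fin_three] at this
  simp only [Matrix.cons_val', Matrix.cons_val_zero, Matrix.cons_val_one,
    Matrix.head_cons, Matrix.empty_val', Matrix.cons_val_fin_one,
    Matrix.head_fin_const, Matrix.of_apply, Matrix.cons_val_two,
    Matrix.tail_cons] at this
  rw [show (Matrix.of ![liftPt a, liftPt b, liftPt c]).det = cross a b c by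
    rw [Matrix.det_fin_three]; simp [liftPt, cross, Matrix.vecHead, Matrix.vecTail]; ring] at this
  rw [mul_comm] at this
  linarith [this]

lemma sign_pos_mul (c x : ℝ) (hc : 0 < c) : Real.sign (c * x) = Real.sign x := by
  rcases lt_trichotomy x 0 with h | h | h
  · rw [Real.sign_of_neg h, Real.sign_of_neg (mul_neg_of_pos_of_neg hc h)]
  · simp [h]
  · rw [Real.sign_of_pos h, Real.sign_of_pos (mul_pos hc h)]

theorem generalPosition_and_Qvalue_fH (p : Fin 4 → ℝ × ℝ)
    (hp : GeneralPosition p) (H : Matrix (Fin 3) (Fin 3) ℝ)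
    (hdet : H.det ≠ 0) (hw : ∀ i, 0 < wH H (p i)) :
    GeneralPosition (fun i => fH H (p i)) ∧
      Qvalue (fun i => fH H (p i)) = Qvalue p := by
  have key : ∀ i j k : Fin 4, cross (fH H (p i)) (fH H (p j)) (fH H (p k))
      = H.det * cross (p i) (p j) (p k) / (wH H (p i) * wH H (p j) * wH H (p k)) :=
    fun i j k => cross_fH H _ _ _ (hw i).ne' (hw j).ne' (hw k).ne'
  constructor
  · intro i j k hij hik hjk
    simp only [key i j k]
    exact div_ne_zero (mul_ne_zero hdet (hp i j k hij hik hjk))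
      (ne_of_gt (mul_pos (mul_pos (hw i) (hw j)) (hw k)))
  · have hsign : ∀ i : Fin 4,
        Real.sign (cross (fH H (p (i - 1))) (fH H (p i)) (fH H (p (i + 1))))
          = Real.sign H.det * Real.sign (cross (p (i - 1)) (p i) (p (i + 1))) := by
      intro i
      rw [key (i - 1) i (i + 1)]
      have hW : 0 < wH H (p (i - 1)) * wH H (p i) * wH H (p (i + 1)) := mul_pos (mul_pos (hw _) (hw _)) (hw _)
      rw [div_eq_inv_mul, sign_pos_mul _ _ (inv_pos.mpr hW)]
      rcases hdet.lt_or_gt with h | h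
      · rw [Real.sign_of_neg h, show H.det * cross (p (i - 1)) (p i) (p (i + 1))
          = -((-H.det) * cross (p (i - 1)) (p i) (p (i + 1))) by ring,
          Real.sign_neg, sign_pos_mul _ _ (by linarith)]
        ring
      · rw [Real.sign_of_pos h, sign_pos_mul _ _ h, one_mul]
    unfold Qvalue
    simp only [hsign]
    rw [← Finset.mul_sum, abs_mul]
    rcases hdet.lt_or_gt with h | h
    · rw [Real.sign_of_neg h]; simp
    · rw [Real.sign_of_pos h]; simp
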